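/- For 1 ≤ n ≤ 4 the competition graph C(J_n(1)) of the finite Jaco graph J_n(1) has no edges (it consists of isolated vertices only), while for n = 5 the pair v_3, v_4 is an edge of C(J_5(1)); thus J_5(1) is the smallest finite Jaco graph whose competition graph contains an edge. -/
import Mathlib


/-- In-degree of vertex `v_i` in the infinite Jaco graph `J_∞(1)`, defined by strong
recursion: `d⁻(v_i)` is the number of `k < i` with an arc `(v_k, v_i)`, where for `k < i`
the arc `(v_k, v_i)` is present iff `2k - d⁻(v_k) ≥ i` (and `k ≥ 1`). -/
noncomputable def jacoInDeg (n : ℕ) : ℕ :=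
  Nat.strongRecOn n (fun n ih =>
    ((Finset.range n).attach.filter
      (fun k => 1 ≤ k.1 ∧ n ≤ 2 * k.1 - ih k.1 (Finset.mem_range.mp k.2))).card)


lemma jacoInDeg_eq (n : ℕ) : jacoInDeg n =
    ((Finset.range n).filter (fun k => 1 ≤ k ∧ n ≤ 2 * k - jacoInDeg k)).card := by
  rw [jacoInDeg, Nat.strongRecOn, WellFounded.fix_eq]
  rw [Finset.card_filter, Finset.card_filter]
  exact Finset.sum_attach (Finset.range n)
    (fun k => if 1 ≤ k ∧ n ≤ 2 * k - jacoInDeg k then 1 else 0)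

lemma jacoInDeg1 : jacoInDeg 1 = 0 := by
  rw [jacoInDeg_eq]; norm_num [Finset.range_add_one, Finset.filter_insert, Finset.filter_singleton]
lemma jacoInDeg2 : jacoInDeg 2 = 1 := by
  rw [jacoInDeg_eq]
  norm_num [Finset.range_add_one, Finset.filter_insert, Finset.filter_singleton, jacoInDeg1]
lemma jacoInDeg3 : jacoInDeg 3 = 1 := by
  rw [jacoInDeg_eq]
  norm_num [Finset.range_add_one, Finset.filter_insert, Finset.filter_singleton, jacoInDeg1,
    jacoInDeg2]
lemma jacoInDeg4 : jacoInDeg 4 = 1 := by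
  rw [jacoInDeg_eq]
  norm_num [Finset.range_add_one, Finset.filter_insert, Finset.filter_singleton, jacoInDeg1,
    jacoInDeg2, jacoInDeg3]

/-- The arc `(v_i, v_j)` of the infinite Jaco graph `J_∞(1)` (vertices indexed from 1):
present iff `i < j` and `2i - d⁻(v_i) ≥ j`. -/
def jacoArc (i j : ℕ) : Prop :=
  1 ≤ i ∧ i < j ∧ j ≤ 2 * i - jacoInDeg i

noncomputable instance (i j : ℕ) : Decidable (jacoArc i j) := by unfold jacoArc; infer_instance

/-- Out-degree of `v_i` in the finite Jaco graph `J_n(1)` (vertex set `{v_1, …, v_n}`). -/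
noncomputable  def jacoOutDeg (n i : ℕ) : ℕ :=
  ((Finset.Icc 1 n).filter (fun j => jacoArc i j)).card

/-- In-degree of `v_i` in the finite Jaco graph `J_n(1)`. -/
noncomputable def jacoInDegFin (n i : ℕ) : ℕ :=
  ((Finset.Icc 1 n).filter (fun k => jacoArc k i)).card

/-- Adjacency in the competition graph `C(J_n(1))`: distinct vertices `v_a, v_b` of
`J_n(1)` are adjacent iff some vertex `v_w` of `J_n(1)` is a common out-neighbour. -/
def jacoCompAdj (n a b : ℕ) : Prop :=
  a ≠ b ∧ a ∈ Finset.Icc 1 n ∧ b ∈ Finset.Icc 1 n ∧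
    ∃ w ∈ Finset.Icc 1 n, jacoArc a w ∧ jacoArc b w



lemma arc_small {a w : ℕ} (hw : w ≤ 4) (h : jacoArc a w) : a + 1 = w := by
  obtain ⟨h1, h2, h3⟩ := h
  have ha : a ≤ 3 := by omega
  interval_cases a
  · rw [jacoInDeg1] at h3; omega
  · rw [jacoInDeg2] at h3; omega
  · rw [jacoInDeg3] at h3; omega

/-- For `1 ≤ n ≤ 4` the competition graph `C(J_n(1))` has no edges,
while `v_3 v_4` is an edge of `C(J_5(1))`; thus `J_5(1)` is the smallest finite Jaco graph
whose competition graph contains an edge. -/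
theorem smallest_Jaco_graph_with_competition_edge :
    (∀ n : ℕ, 1 ≤ n → n ≤ 4 → ∀ a b : ℕ, ¬ jacoCompAdj n a b) ∧
    jacoCompAdj 5 3 4 := by
  constructor
  · rintro n h1 h4 a b ⟨hab, ha, hb, w, hw, haw, hbw⟩
    simp only [Finset.mem_Icc] at hw
    have e1 := arc_small (by omega) haw
    have e2 := arc_small (by omega) hbw
    omega
  · refine ⟨by norm_num, by simp, by simp, 5, by simp,
      ⟨by norm_num, by norm_num, by rw [jacoInDeg3]⟩,
      ⟨by norm_num, by norm_num, by rw [jacoInDeg4]; norm_num⟩⟩
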